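/- The conditional min-entropy is strongly subadditive: for every density operator ρ_ABC on H_A ⊗ H_B ⊗ H_C, H_min(A|B)_{ρ_AB} ≥ H_min(A|BC)_{ρ_ABC}, where ρ_AB = tr_C ρ_ABC. -/

import Mathlib

open Matrix
open scoped Kronecker ComplexConjugate ComplexOrder

noncomputable section

/-- Partial trace over the first (A) subsystem. -/
def ptraceA {A B : Type*} [Fintype A] (M : Matrix (A × B) (A × B) ℂ) :
    Matrix B B ℂ :=
  Matrix.of fun i j => ∑ a : A, M (a, i) (a, j)

/-- Partial trace over the second (B) subsystem. -/
def ptraceB {A B : Type*} [Fintype B] (M : Matrix (A × B) (A × B) ℂ) :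
    Matrix A A ℂ :=
  Matrix.of fun i j => ∑ b : B, M (i, b) (j, b)

/-- A density operator: positive semidefinite with unit trace. -/
def IsDensity {n : Type*} [Fintype n] (ρ : Matrix n n ℂ) : Prop :=
  ρ.PosSemidef ∧ ρ.trace = 1

/-- Conditional min-entropy `H_min(A|B)_ρ = - inf_σ D_∞(ρ ‖ id_A ⊗ σ)`, where the
infimum ranges over density operators `σ` on `B` and
`D_∞(τ‖τ') = inf {λ | τ ≤ 2^λ τ'}`. -/
def Hmin {A B : Type*} [Fintype A] [Fintype B] [DecidableEq A] [DecidableEq B]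
    (ρ : Matrix (A × B) (A × B) ℂ) : ℝ :=
  - sInf {l : ℝ | ∃ σ : Matrix B B ℂ, IsDensity σ ∧
      (((2 : ℝ) ^ l : ℝ) • ((1 : Matrix A A ℂ) ⊗ₖ σ) - ρ).PosSemidef}

open scoped Classical in
/-- Positive semidefinite square root (junk value `0` off the PSD cone). -/
def psqrt {n : Type*} [Fintype n] [DecidableEq n] (M : Matrix n n ℂ) : Matrix n n ℂ :=
  if h : M.PosSemidef then
    (h.1.eigenvectorUnitary : Matrix n n ℂ) * diagonal ((↑) ∘ (Real.sqrt ·) ∘ h.1.eigenvalues) *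
      (star h.1.eigenvectorUnitary : Matrix n n ℂ) else 0

/-- Trace norm `‖M‖₁ = tr √(Mᴴ M)`. -/
def traceNorm {n : Type*} [Fintype n] [DecidableEq n] (M : Matrix n n ℂ) : ℝ :=
  (psqrt (Mᴴ * M)).trace.re

/-- Fidelity `F(ρ,σ) = ‖√ρ √σ‖₁`. -/
def fidelity {n : Type*} [Fintype n] [DecidableEq n] (ρ σ : Matrix n n ℂ) : ℝ :=
  traceNorm (psqrt ρ * psqrt σ)

/-- Choi matrix of a linear map on matrices. -/
def choi {B A' : Type*} [Fintype B] [DecidableEq B] [Fintype A']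
    (F : Matrix B B ℂ →ₗ[ℂ] Matrix A' A' ℂ) : Matrix (B × A') (B × A') ℂ :=
  Matrix.of fun p q => (F (Matrix.single p.1 q.1 1)) p.2 q.2

/-- A quantum operation (CPTP map): completely positive (PSD Choi matrix, by Choi's
theorem) and trace-preserving. -/
def IsCPTP {B A' : Type*} [Fintype B] [DecidableEq B] [Fintype A']
    (F : Matrix B B ℂ →ₗ[ℂ] Matrix A' A' ℂ) : Prop :=
  (choi F).PosSemidef ∧ ∀ M : Matrix B B ℂ, (F M).trace = M.trace

/-- The map `id_A ⊗ F` applied to a bipartite operator. -/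
def idTensor {A B A' : Type*} [Fintype B]
    (F : Matrix B B ℂ →ₗ[ℂ] Matrix A' A' ℂ) (ρ : Matrix (A × B) (A × B) ℂ) :
    Matrix (A × A') (A × A') ℂ :=
  Matrix.of fun p q => (F (Matrix.of fun b b' => ρ (p.1, b) (q.1, b'))) p.2 q.2

/-- The quadratic form `⟨ψ|M|ψ⟩` (real part). -/
def pureOverlap {n : Type*} [Fintype n] (ψ : n → ℂ) (M : Matrix n n ℂ) : ℝ :=
  (∑ p, ∑ q, conj (ψ p) * M p q * ψ q).re

/-- The maximally entangled state `|Φ⟩ = d^{-1/2} ∑ₓ |x⟩|x⟩`. -/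
def maxEnt (A : Type*) [Fintype A] [DecidableEq A] : A × A → ℂ :=
  fun p => if p.1 = p.2 then ((Real.sqrt (Fintype.card A))⁻¹ : ℝ) else 0

/-- `q_corr(A|B)_ρ`: `d_A` times the maximal squared fidelity with the maximally
entangled state achievable by quantum operations on `B`. -/
def qcorr {A B : Type*} [Fintype A] [Fintype B] [DecidableEq A] [DecidableEq B]
    (ρ : Matrix (A × B) (A × B) ℂ) : ℝ :=
  (Fintype.card A : ℝ) *
    sSup {x : ℝ | ∃ F : Matrix B B ℂ →ₗ[ℂ] Matrix A A ℂ, IsCPTP F ∧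
      x = pureOverlap (maxEnt A) (idTensor F ρ)}

/-- The completely mixed state. -/
def mixed (A : Type*) [Fintype A] [DecidableEq A] : Matrix A A ℂ :=
  ((Fintype.card A : ℂ)⁻¹) • (1 : Matrix A A ℂ)

/-- `q_decpl(A|B)_ρ`: `d_A` times the maximal squared fidelity with `τ_A ⊗ σ_B`. -/
def qdecpl {A B : Type*} [Fintype A] [Fintype B] [DecidableEq A] [DecidableEq B]
    (ρ : Matrix (A × B) (A × B) ℂ) : ℝ :=
  (Fintype.card A : ℝ) *
    sSup {x : ℝ | ∃ σ : Matrix B B ℂ, IsDensity σ ∧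
      x = (fidelity ρ ((mixed A) ⊗ₖ σ)) ^ 2}

/-- Reduced state `tr_C |ψ⟩⟨ψ|` of a pure state `ψ` on `(A ⊗ B) ⊗ C`. -/
def redL {S C : Type*} [Fintype C] (ψ : S × C → ℂ) : Matrix S S ℂ :=
  Matrix.of fun s s' => ∑ c, ψ (s, c) * conj (ψ (s', c))

/-- Reduced state `tr_B |ψ⟩⟨ψ|` on `A ⊗ C` of a pure state `ψ` on `(A ⊗ B) ⊗ C`. -/
def redAC {A B C : Type*} [Fintype B] (ψ : (A × B) × C → ℂ) :
    Matrix (A × C) (A × C) ℂ :=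
  Matrix.of fun p q => ∑ b, ψ ((p.1, b), p.2) * conj (ψ ((q.1, b), q.2))


/-- Partial trace over the `C` subsystem of an operator on `A ⊗ (B ⊗ C)`. -/
def traceOutC {A B C : Type*} [Fintype C]
    (ρ : Matrix (A × (B × C)) (A × (B × C)) ℂ) : Matrix (A × B) (A × B) ℂ :=
  Matrix.of fun p q => ∑ c, ρ (p.1, (p.2, c)) (q.1, (q.2, c))

/-! Applying the positive, trace-preserving map `tr_C` to `2^λ (1_A ⊗ σ_BC) - ρ_ABC ≥ 0` gives
`2^λ (1_A ⊗ σ_B) - ρ_AB ≥ 0` with `σ_B = tr_C σ_BC`, so every `λ` admissible for `H_min(A|BC)` is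
admissible for `H_min(A|B)` and the infimum over the larger set is smaller. Both infima are
genuine (`sInf` is `0` on sets that are empty or unbounded below): the set for `ABC` is nonempty
because a Hermitian operator lies below a multiple of the identity, and the set for `AB` is
bounded below by `-log d_A`, as one sees by taking traces. -/

namespace Matrix

open scoped Matrix.Norms.L2Operator MatrixOrder in
theorem IsHermitian.exists_posSemidef_smul_one_sub {n : Type*} [Fintype n] [DecidableEq n]
    {M : Matrix n n ℂ} (hM : M.IsHermitian) : ∃ c : ℝ, 0 < c ∧ (c • 1 - M).PosSemidef := by
  refine ⟨‖M‖ + 1, by positivity, ?_⟩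
  have h : M ≤ algebraMap ℝ _ (‖M‖ + 1) :=
    (IsSelfAdjoint.le_algebraMap_norm_self hM).trans (algebraMap_mono _ (lt_add_one _).le)
  simpa [Matrix.le_iff, Algebra.algebraMap_eq_smul_one] using h

end Matrix

section PartialTrace

variable {A B C : Type*}

theorem ptraceB_eq_sum_submatrix [Fintype B] (M : Matrix (A × B) (A × B) ℂ) :
    ptraceB M = ∑ b : B, M.submatrix (·, b) (·, b) := by
  ext i j
  simp [ptraceB, Matrix.sum_apply]

theorem Matrix.PosSemidef.ptraceB [Fintype B] {M : Matrix (A × B) (A × B) ℂ}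
    (hM : M.PosSemidef) : (ptraceB M).PosSemidef := by
  rw [ptraceB_eq_sum_submatrix]
  exact posSemidef_sum _ fun b _ => hM.submatrix _

theorem trace_ptraceB [Fintype A] [Fintype B] (M : Matrix (A × B) (A × B) ℂ) :
    (ptraceB M).trace = M.trace := by
  simp [Matrix.trace, ptraceB, Fintype.sum_prod_type]

theorem IsDensity.ptraceB [Fintype A] [Fintype B] {σ : Matrix (A × B) (A × B) ℂ}
    (hσ : IsDensity σ) : IsDensity (ptraceB σ) :=
  ⟨hσ.1.ptraceB, (trace_ptraceB σ).trans hσ.2⟩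

theorem traceOutC_eq_ptraceB_submatrix [Fintype C]
    (M : Matrix (A × (B × C)) (A × (B × C)) ℂ) :
    traceOutC M = ptraceB (M.submatrix (Equiv.prodAssoc A B C) (Equiv.prodAssoc A B C)) :=
  rfl

theorem Matrix.PosSemidef.traceOutC [Fintype C] {M : Matrix (A × (B × C)) (A × (B × C)) ℂ}
    (hM : M.PosSemidef) : (traceOutC M).PosSemidef := by
  rw [traceOutC_eq_ptraceB_submatrix]
  exact (hM.submatrix _).ptraceB

theorem trace_traceOutC [Fintype A] [Fintype B] [Fintype C]
    (M : Matrix (A × (B × C)) (A × (B × C)) ℂ) :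
    (traceOutC M).trace = M.trace := by
  simp [Matrix.trace, traceOutC, Fintype.sum_prod_type]

theorem traceOutC_smul_one_kronecker_sub [Fintype C] [DecidableEq A] (r : ℝ)
    (σ : Matrix (B × C) (B × C) ℂ) (M : Matrix (A × (B × C)) (A × (B × C)) ℂ) :
    traceOutC (r • ((1 : Matrix A A ℂ) ⊗ₖ σ) - M) =
      r • ((1 : Matrix A A ℂ) ⊗ₖ ptraceB σ) - traceOutC M := by
  ext p q
  simp [traceOutC, ptraceB, kroneckerMap_apply, Finset.sum_sub_distrib, Finset.mul_sum]

end PartialTrace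

theorem IsDensity.nonempty {n : Type*} [Fintype n] {ρ : Matrix n n ℂ} (hρ : IsDensity ρ) :
    Nonempty n := by
  by_contra h
  rw [not_nonempty_iff] at h
  simpa [Matrix.trace] using hρ.2

theorem isDensity_mixed (n : Type*) [Fintype n] [DecidableEq n] [Nonempty n] :
    IsDensity (mixed n) := by
  refine ⟨PosSemidef.one.smul ?_, ?_⟩
  · positivity
  · simp [mixed, Matrix.trace_smul, Fintype.card_ne_zero]

section MinEntropy

variable {A B : Type*} [Fintype A] [Fintype B] [DecidableEq A]

def hminFeasible (ρ : Matrix (A × B) (A × B) ℂ) : Set ℝ :=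
  {l : ℝ | ∃ σ : Matrix B B ℂ, IsDensity σ ∧
      (((2 : ℝ) ^ l : ℝ) • ((1 : Matrix A A ℂ) ⊗ₖ σ) - ρ).PosSemidef}

theorem Hmin_eq_neg_sInf_hminFeasible [DecidableEq B] (ρ : Matrix (A × B) (A × B) ℂ) :
    Hmin ρ = -sInf (hminFeasible ρ) :=
  rfl

theorem hminFeasible_nonempty [DecidableEq B] [Nonempty B] {ρ : Matrix (A × B) (A × B) ℂ}
    (hρ : ρ.IsHermitian) : (hminFeasible ρ).Nonempty := by
  obtain ⟨c, hc, hcρ⟩ := hρ.exists_posSemidef_smul_one_sub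
  have hB : (0 : ℝ) < Fintype.card B := by exact_mod_cast Fintype.card_pos
  refine ⟨Real.logb 2 (Fintype.card B * c), mixed B, isDensity_mixed B, ?_⟩
  have hscale : ((2 : ℝ) ^ Real.logb 2 (Fintype.card B * c) : ℝ) •
      ((1 : Matrix A A ℂ) ⊗ₖ mixed B) = c • 1 := by
    rw [Real.rpow_logb (by norm_num) (by norm_num) (by positivity), mixed, kronecker_smul,
      one_kronecker_one, ← Complex.coe_smul, smul_smul, ← Complex.coe_smul]
    congr 1
    push_cast
    field_simp
  rwa [hscale]

theorem bddBelow_hminFeasible {ρ : Matrix (A × B) (A × B) ℂ} (hρ : ρ.trace = 1) :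
    BddBelow (hminFeasible ρ) := by
  refine ⟨Real.logb 2 (Fintype.card A)⁻¹, ?_⟩
  rintro l ⟨σ, hσ, hps⟩
  have htr : 1 ≤ (2 : ℝ) ^ l * Fintype.card A := by
    have := hps.trace_nonneg
    rw [trace_sub, trace_smul, trace_kronecker, trace_one, hσ.2, hρ, mul_one, Complex.real_smul,
      ← Complex.ofReal_natCast, ← Complex.ofReal_mul, ← Complex.ofReal_one, ← Complex.ofReal_sub,
      Complex.zero_le_real] at this
    linarith
  have hA : (0 : ℝ) < Fintype.card A :=
    pos_of_mul_pos_right (one_pos.trans_le htr) (by positivity)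
  rw [Real.logb_le_iff_le_rpow one_lt_two (inv_pos.mpr hA), inv_le_iff_one_le_mul₀ hA]
  linarith

end MinEntropy

theorem hminFeasible_subset_hminFeasible_traceOutC {A B C : Type*} [Fintype A] [Fintype B]
    [Fintype C] [DecidableEq A] (ρ : Matrix (A × (B × C)) (A × (B × C)) ℂ) :
    hminFeasible ρ ⊆ hminFeasible (traceOutC ρ) := by
  rintro l ⟨σ, hσ, hps⟩
  exact ⟨ptraceB σ, hσ.ptraceB, traceOutC_smul_one_kronecker_sub _ σ ρ ▸ hps.traceOutC⟩

/-- strong subadditivity of the conditional min-entropy: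
`H_min(A|B) ≥ H_min(A|BC)`. -/
theorem stmt14 {A B C : Type*} [Fintype A] [Fintype B] [Fintype C]
    [DecidableEq A] [DecidableEq B] [DecidableEq C]
    (ρ : Matrix (A × (B × C)) (A × (B × C)) ℂ) (hρ : IsDensity ρ) :
    Hmin (traceOutC ρ) ≥ Hmin ρ := by
  have : Nonempty (B × C) := hρ.nonempty.map Prod.snd
  rw [ge_iff_le, Hmin_eq_neg_sInf_hminFeasible, Hmin_eq_neg_sInf_hminFeasible, neg_le_neg_iff]
  exact csInf_le_csInf (bddBelow_hminFeasible ((trace_traceOutC ρ).trans hρ.2))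
    (hminFeasible_nonempty hρ.1.isHermitian) (hminFeasible_subset_hminFeasible_traceOutC ρ)

end
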